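/- Let X be a nontrivial real Banach space and n ≥ 2 an integer. Then C̄_mNJ^{(n)}(X) = n if and only if C̄_NJ^{(n)}(X) = n; equivalently, C̄_mNJ^{(n)}(X) < n if and only if C̄_NJ^{(n)}(X) < n. -/

import Mathlib

open Finset MeasureTheory

noncomputable def njRatio {X : Type*} [NormedAddCommGroup X] [NormedSpace ℝ X]
    {m : ℕ} (x0 : X) (y : Fin m → X) : ℝ :=
  (∑ ε : Fin m → Bool, ‖x0 + ∑ j, (if ε j then (1 : ℝ) else -1) • y j‖ ^ 2) /
    (2 ^ m * (‖x0‖ ^ 2 + ∑ j, ‖y j‖ ^ 2))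

noncomputable def upperNJ (X : Type*) [NormedAddCommGroup X] [NormedSpace ℝ X] (n : ℕ) : ℝ :=
  sSup {c : ℝ | ∃ (x0 : X) (y : Fin (n - 1) → X),
    0 < ‖x0‖ ^ 2 + ∑ j, ‖y j‖ ^ 2 ∧ c = njRatio x0 y}

noncomputable def lowerNJ (X : Type*) [NormedAddCommGroup X] [NormedSpace ℝ X] (n : ℕ) : ℝ :=
  sInf {c : ℝ | ∃ (x0 : X) (y : Fin (n - 1) → X),
    0 < ‖x0‖ ^ 2 + ∑ j, ‖y j‖ ^ 2 ∧ c = njRatio x0 y}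

noncomputable def upperMNJ (X : Type*) [NormedAddCommGroup X] [NormedSpace ℝ X] (n : ℕ) : ℝ :=
  sSup {c : ℝ | ∃ (x0 : X) (y : Fin (n - 1) → X),
    ‖x0‖ = 1 ∧ (∀ j, ‖y j‖ = 1) ∧ c = njRatio x0 y}

noncomputable def lowerMNJ (X : Type*) [NormedAddCommGroup X] [NormedSpace ℝ X] (n : ℕ) : ℝ :=
  sInf {c : ℝ | ∃ (x0 : X) (y : Fin (n - 1) → X),
    ‖x0‖ = 1 ∧ (∀ j, ‖y j‖ = 1) ∧ c = njRatio x0 y}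

/-!
The modified constant never exceeds the ordinary one, and both are at most `n` by the triangle
inequality followed by Cauchy–Schwarz, `(∑ ‖x_j‖)² ≤ n ∑ ‖x_j‖²`. Conversely, if a tuple with
`∑ ‖x_j‖² = n` has ratio at least `n - ε`, then `∑ ‖x_j‖ ≥ n - ε`, so `∑ (‖x_j‖ - 1)² ≤ 2ε`:
near-extremal tuples are nearly unit tuples. Normalising each `x_j` then moves every signed sum by
at most `∑ |‖x_j‖ - 1| ≤ √(2nε)`, so unit tuples reach ratio `n - ε - 2√(2nε)`, and letting
`ε → 0` gives the modified constant `n` as soon as the ordinary one is `n`.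
-/

section RealInequalities

variable {m : ℕ}

lemma sq_add_sum_le (a : ℝ) (b : Fin m → ℝ) :
    (a + ∑ j, b j) ^ 2 ≤ (m + 1) * (a ^ 2 + ∑ j, b j ^ 2) := by
  have h := sq_sum_le_card_mul_sum_sq (s := univ) (f := (Fin.cons a b : Fin (m + 1) → ℝ))
  simpa [Fin.sum_univ_succ] using h

lemma add_sum_le_of_sq_add_sum_sq_eq {a : ℝ} {b : Fin m → ℝ}
    (h : a ^ 2 + ∑ j, b j ^ 2 = m + 1) : a + ∑ j, b j ≤ m + 1 := by
  have hsq := sq_add_sum_le a b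
  rw [h, ← sq] at hsq
  exact (le_abs_self _).trans (abs_le_of_sq_le_sq hsq (by positivity))

end RealInequalities

section SignedSums

variable {X : Type*} [NormedAddCommGroup X] [NormedSpace ℝ X] {m : ℕ}

def signedSum (x0 : X) (y : Fin m → X) (θ : Fin m → Bool) : X :=
  x0 + ∑ j, (if θ j then (1 : ℝ) else -1) • y j

lemma njRatio_eq (x0 : X) (y : Fin m → X) :
    njRatio x0 y =
      (∑ θ, ‖signedSum x0 y θ‖ ^ 2) / (2 ^ m * (‖x0‖ ^ 2 + ∑ j, ‖y j‖ ^ 2)) :=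
  rfl

lemma signedSum_sub (x0 u0 : X) (y v : Fin m → X) (θ : Fin m → Bool) :
    signedSum x0 y θ - signedSum u0 v θ = signedSum (x0 - u0) (y - v) θ := by
  simp only [signedSum, Pi.sub_apply, smul_sub, Finset.sum_sub_distrib]
  abel

lemma signedSum_smul (t : ℝ) (x0 : X) (y : Fin m → X) (θ : Fin m → Bool) :
    signedSum (t • x0) (t • y) θ = t • signedSum x0 y θ := by
  simp only [signedSum, Pi.smul_apply, smul_add, Finset.smul_sum, smul_comm t]

lemma norm_signedSum_le (x0 : X) (y : Fin m → X) (θ : Fin m → Bool) :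
    ‖signedSum x0 y θ‖ ≤ ‖x0‖ + ∑ j, ‖y j‖ := by
  have hterm (j : Fin m) : ‖(if θ j then (1 : ℝ) else -1) • y j‖ = ‖y j‖ := by
    rw [norm_smul]
    split <;> simp
  refine (norm_add_le _ _).trans ?_
  gcongr
  exact (norm_sum_le _ _).trans_eq (Finset.sum_congr rfl fun j _ => hterm j)

lemma sum_norm_signedSum_sq_le (x0 : X) (y : Fin m → X) :
    ∑ θ, ‖signedSum x0 y θ‖ ^ 2 ≤ 2 ^ m * (‖x0‖ + ∑ j, ‖y j‖) ^ 2 := by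
  calc ∑ θ, ‖signedSum x0 y θ‖ ^ 2 ≤ ∑ _θ : Fin m → Bool, (‖x0‖ + ∑ j, ‖y j‖) ^ 2 :=
        Finset.sum_le_sum fun θ _ => pow_le_pow_left₀ (norm_nonneg _) (norm_signedSum_le x0 y θ) 2
    _ = 2 ^ m * (‖x0‖ + ∑ j, ‖y j‖) ^ 2 := by simp

lemma sum_norm_signedSum_sq_sub_le (x0 u0 : X) (y v : Fin m → X) :
    ∑ θ, ‖signedSum x0 y θ‖ ^ 2 - ∑ θ, ‖signedSum u0 v θ‖ ^ 2 ≤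
      2 ^ m * ((‖x0 - u0‖ + ∑ j, ‖y j - v j‖) *
        ((‖x0‖ + ∑ j, ‖y j‖) + (‖u0‖ + ∑ j, ‖v j‖))) := by
  rw [← Finset.sum_sub_distrib]
  calc ∑ θ, (‖signedSum x0 y θ‖ ^ 2 - ‖signedSum u0 v θ‖ ^ 2)
      ≤ ∑ _θ : Fin m → Bool, (‖x0 - u0‖ + ∑ j, ‖y j - v j‖) *
          ((‖x0‖ + ∑ j, ‖y j‖) + (‖u0‖ + ∑ j, ‖v j‖)) := by
        refine Finset.sum_le_sum fun θ _ => ?_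
        have hdiff : ‖signedSum x0 y θ‖ - ‖signedSum u0 v θ‖ ≤ ‖x0 - u0‖ + ∑ j, ‖y j - v j‖ :=
          (norm_sub_norm_le _ _).trans (signedSum_sub x0 u0 y v θ ▸ norm_signedSum_le _ _ θ)
        rw [sq_sub_sq, mul_comm]
        exact mul_le_mul hdiff (add_le_add (norm_signedSum_le x0 y θ) (norm_signedSum_le u0 v θ))
          (by positivity) (by positivity)
    _ = _ := by simp

lemma njRatio_nonneg (x0 : X) (y : Fin m → X) : 0 ≤ njRatio x0 y := by
  rw [njRatio_eq]
  positivity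

lemma njRatio_le (x0 : X) (y : Fin m → X) : njRatio x0 y ≤ m + 1 := by
  rw [njRatio_eq]
  refine div_le_of_le_mul₀ (by positivity) (by positivity) ?_
  calc ∑ θ, ‖signedSum x0 y θ‖ ^ 2 ≤ 2 ^ m * (‖x0‖ + ∑ j, ‖y j‖) ^ 2 :=
        sum_norm_signedSum_sq_le x0 y
    _ ≤ 2 ^ m * ((m + 1) * (‖x0‖ ^ 2 + ∑ j, ‖y j‖ ^ 2)) := by
        gcongr; exact sq_add_sum_le _ _
    _ = _ := by ring

lemma njRatio_smul (x0 : X) (y : Fin m → X) {t : ℝ} (ht : t ≠ 0) :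
    njRatio (t • x0) (t • y) = njRatio x0 y := by
  simp only [njRatio_eq, signedSum_smul, norm_smul, Pi.smul_apply, mul_pow, Real.norm_eq_abs,
    sq_abs, ← Finset.mul_sum, ← mul_add]
  rw [mul_left_comm, mul_div_mul_left _ _ (pow_ne_zero 2 ht)]

lemma sum_sq_norm_sub_one_le {x0 : X} {y : Fin m → X} {ε : ℝ}
    (hS : ‖x0‖ ^ 2 + ∑ j, ‖y j‖ ^ 2 = m + 1) (h : m + 1 - ε ≤ njRatio x0 y) :
    (‖x0‖ - 1) ^ 2 + ∑ j, (‖y j‖ - 1) ^ 2 ≤ 2 * ε := by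
  set T := ‖x0‖ + ∑ j, ‖y j‖
  have hM : (0 : ℝ) < m + 1 := by positivity
  have hT0 : 0 ≤ T := by positivity
  have hT_le : T ≤ m + 1 := add_sum_le_of_sq_add_sum_sq_eq hS
  have hT_sq : (m + 1 - ε) * (m + 1) ≤ T ^ 2 := by
    rw [njRatio_eq, hS, le_div_iff₀ (by positivity)] at h
    have := sum_norm_signedSum_sq_le x0 y
    nlinarith [pow_pos (two_pos (α := ℝ)) m]
  have hT_ge : m + 1 - ε ≤ T :=
    le_of_mul_le_mul_right (by nlinarith [mul_le_mul_of_nonneg_left hT_le hT0]) hM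
  have hexpand : (‖x0‖ - 1) ^ 2 + ∑ j, (‖y j‖ - 1) ^ 2 = 2 * (m + 1) - 2 * T := by
    simp only [T, sub_sq, mul_one, one_pow, Finset.sum_add_distrib, Finset.sum_sub_distrib,
      ← Finset.mul_sum, Finset.sum_const, card_univ, Fintype.card_fin, nsmul_eq_mul]
    linarith
  linarith

lemma norm_inv_norm_smul_sub_self {x : X} (hx : x ≠ 0) : ‖‖x‖⁻¹ • x - x‖ = |‖x‖ - 1| := by
  have hpos := norm_pos_iff.mpr hx
  calc ‖‖x‖⁻¹ • x - x‖ = ‖(‖x‖⁻¹ - 1) • x‖ := by rw [sub_smul, one_smul]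
    _ = |(‖x‖⁻¹ - 1) * ‖x‖| := by rw [norm_smul, Real.norm_eq_abs, abs_mul, abs_norm]
    _ = |‖x‖ - 1| := by rw [sub_mul, inv_mul_cancel₀ hpos.ne', one_mul, abs_sub_comm]

lemma exists_unit_njRatio_ge_of_normSq_eq {x0 : X} {y : Fin m → X} {ε : ℝ}
    (hS : ‖x0‖ ^ 2 + ∑ j, ‖y j‖ ^ 2 = m + 1) (hε : ε < 1 / 2)
    (h : m + 1 - ε ≤ njRatio x0 y) :
    ∃ (u0 : X) (v : Fin m → X), ‖u0‖ = 1 ∧ (∀ j, ‖v j‖ = 1) ∧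
      m + 1 - ε - 2 * √(2 * (m + 1) * ε) ≤ njRatio u0 v := by
  have hdev := sum_sq_norm_sub_one_le hS h
  have hsum_nonneg : 0 ≤ ∑ j, (‖y j‖ - 1) ^ 2 := by positivity
  have hne (x : X) (hx : (‖x‖ - 1) ^ 2 ≤ 2 * ε) : x ≠ 0 := by
    rintro rfl
    norm_num at hx
    linarith
  have hx0 : x0 ≠ 0 := hne x0 (by linarith)
  have hy (j : Fin m) : y j ≠ 0 :=
    hne (y j) (by
      linarith [sq_nonneg (‖x0‖ - 1),
        single_le_sum (fun i _ => sq_nonneg (‖y i‖ - 1)) (mem_univ j)])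
  set u0 := ‖x0‖⁻¹ • x0
  set v : Fin m → X := fun j => ‖y j‖⁻¹ • y j
  have hu0 : ‖u0‖ = 1 := norm_smul_inv_norm hx0
  have hv (j : Fin m) : ‖v j‖ = 1 := norm_smul_inv_norm (hy j)
  have hSu : ‖u0‖ ^ 2 + ∑ j, ‖v j‖ ^ 2 = m + 1 := by simp [hu0, hv, add_comm]
  have hTu : ‖u0‖ + ∑ j, ‖v j‖ = m + 1 := by simp [hu0, hv, add_comm]
  set D := ‖x0 - u0‖ + ∑ j, ‖y j - v j‖
  have hD : D ≤ √(2 * (m + 1) * ε) := by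
    have hD_eq : D = |‖x0‖ - 1| + ∑ j, |‖y j‖ - 1| := by
      simp only [D, u0, v, norm_sub_rev x0, norm_sub_rev (y _), norm_inv_norm_smul_sub_self hx0,
        norm_inv_norm_smul_sub_self (hy _)]
    refine (le_abs_self D).trans (Real.abs_le_sqrt ?_)
    calc D ^ 2 ≤ (m + 1) * (|‖x0‖ - 1| ^ 2 + ∑ j, |‖y j‖ - 1| ^ 2) := hD_eq ▸ sq_add_sum_le _ _
      _ ≤ (m + 1) * (2 * ε) := by simp only [sq_abs]; gcongr
      _ = 2 * (m + 1) * ε := by ring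
  have hclose : njRatio x0 y - njRatio u0 v ≤ 2 * D := by
    rw [njRatio_eq, njRatio_eq, hS, hSu, ← sub_div, div_le_iff₀ (by positivity)]
    calc _ ≤ 2 ^ m * (D * ((‖x0‖ + ∑ j, ‖y j‖) + (‖u0‖ + ∑ j, ‖v j‖))) :=
          sum_norm_signedSum_sq_sub_le x0 u0 y v
      _ ≤ 2 ^ m * (D * (2 * (m + 1))) := by
          gcongr
          linarith [add_sum_le_of_sq_add_sum_sq_eq hS]
      _ = 2 * D * (2 ^ m * (m + 1)) := by ring
  exact ⟨u0, v, hu0, hv, by linarith⟩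

lemma exists_unit_njRatio_ge {x0 : X} {y : Fin m → X} {ε : ℝ}
    (hS : 0 < ‖x0‖ ^ 2 + ∑ j, ‖y j‖ ^ 2) (hε : ε < 1 / 2)
    (h : m + 1 - ε ≤ njRatio x0 y) :
    ∃ (u0 : X) (v : Fin m → X), ‖u0‖ = 1 ∧ (∀ j, ‖v j‖ = 1) ∧
      m + 1 - ε - 2 * √(2 * (m + 1) * ε) ≤ njRatio u0 v := by
  set t := √((m + 1) / (‖x0‖ ^ 2 + ∑ j, ‖y j‖ ^ 2))
  have ht : 0 < t := Real.sqrt_pos.2 (by positivity)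
  have hS' : ‖t • x0‖ ^ 2 + ∑ j, ‖(t • y) j‖ ^ 2 = m + 1 := by
    simp only [Pi.smul_apply, norm_smul, Real.norm_eq_abs, mul_pow, sq_abs, ← Finset.mul_sum,
      ← mul_add, t, Real.sq_sqrt (by positivity : (0 : ℝ) ≤ (m + 1) / _)]
    exact div_mul_cancel₀ _ hS.ne'
  exact exists_unit_njRatio_ge_of_normSq_eq hS' hε (by rwa [njRatio_smul _ _ ht.ne'])

end SignedSums

section Constants

variable {X : Type*} [NormedAddCommGroup X] [NormedSpace ℝ X] {n : ℕ}

lemma njRatio_le_of_one_le (hn : 1 ≤ n) (x0 : X) (y : Fin (n - 1) → X) : njRatio x0 y ≤ n :=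
  (njRatio_le x0 y).trans_eq (by exact_mod_cast Nat.sub_add_cancel hn)

lemma upperNJ_nonneg : 0 ≤ upperNJ X n :=
  Real.sSup_nonneg (by rintro _ ⟨x0, y, -, rfl⟩; exact njRatio_nonneg x0 y)

lemma upperNJ_le (hn : 1 ≤ n) : upperNJ X n ≤ n :=
  Real.sSup_le (by rintro _ ⟨x0, y, -, rfl⟩; exact njRatio_le_of_one_le hn x0 y) n.cast_nonneg

lemma njRatio_le_upperMNJ (hn : 1 ≤ n) {x0 : X} {y : Fin (n - 1) → X} (hx0 : ‖x0‖ = 1)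
    (hy : ∀ j, ‖y j‖ = 1) : njRatio x0 y ≤ upperMNJ X n :=
  le_csSup ⟨n, by rintro _ ⟨x0, y, -, -, rfl⟩; exact njRatio_le_of_one_le hn x0 y⟩
    ⟨x0, y, hx0, hy, rfl⟩

lemma upperMNJ_le_upperNJ (hn : 1 ≤ n) : upperMNJ X n ≤ upperNJ X n := by
  refine Real.sSup_le ?_ upperNJ_nonneg
  rintro _ ⟨x0, y, hx0, -, rfl⟩
  exact le_csSup ⟨n, by rintro _ ⟨x0, y, -, rfl⟩; exact njRatio_le_of_one_le hn x0 y⟩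
    ⟨x0, y, by rw [hx0]; positivity, rfl⟩

open Filter Topology in
lemma upperMNJ_eq_of_upperNJ_eq (hn : 1 ≤ n) (h : upperNJ X n = n) : upperMNJ X n = n := by
  refine le_antisymm ((upperMNJ_le_upperNJ hn).trans (upperNJ_le hn)) ?_
  have hcast : ((n - 1 : ℕ) : ℝ) + 1 = n := by exact_mod_cast Nat.sub_add_cancel hn
  have hne : {c : ℝ | ∃ (x0 : X) (y : Fin (n - 1) → X),
      0 < ‖x0‖ ^ 2 + ∑ j, ‖y j‖ ^ 2 ∧ c = njRatio x0 y}.Nonempty := by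
    rw [Set.nonempty_iff_ne_empty]
    intro hempty
    rw [upperNJ, hempty, Real.sSup_empty] at h
    exact (Nat.cast_ne_zero.2 (by omega : n ≠ 0)) h.symm
  have happrox : ∀ ε ∈ Set.Ioo (0 : ℝ) (1 / 2), n - ε - 2 * √(2 * n * ε) ≤ upperMNJ X n := by
    rintro ε ⟨hε0, hε⟩
    obtain ⟨_, ⟨x0, y, hS, rfl⟩, hlt⟩ := Real.add_neg_lt_sSup hne (neg_lt_zero.2 hε0)
    obtain ⟨u0, v, hu0, hv, hge⟩ :=
      exists_unit_njRatio_ge hS hε (by rw [hcast]; rw [← upperNJ, h] at hlt; linarith)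
    rw [hcast] at hge
    exact hge.trans (njRatio_le_upperMNJ hn hu0 hv)
  have hlim : Tendsto (fun ε : ℝ => n - ε - 2 * √(2 * n * ε)) (𝓝[>] 0) (𝓝 n) :=
    tendsto_nhdsWithin_of_tendsto_nhds ((by fun_prop : Continuous _).tendsto' _ _ (by simp))
  exact le_of_tendsto hlim (eventually_of_mem (Ioo_mem_nhdsGT (by norm_num)) happrox)

end Constants

theorem stmt_16_general (X : Type*) [NormedAddCommGroup X] [NormedSpace ℝ X]
    (n : ℕ) (hn : 2 ≤ n) :
    (upperMNJ X n = n ↔ upperNJ X n = n) ∧ (upperMNJ X n < n ↔ upperNJ X n < n) := by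
  have hle : upperMNJ X n ≤ upperNJ X n := upperMNJ_le_upperNJ (by omega)
  have hNJ_le : upperNJ X n ≤ n := upperNJ_le (by omega)
  have hNJ_eq : upperNJ X n = n → upperMNJ X n = n := upperMNJ_eq_of_upperNJ_eq (by omega)
  refine ⟨⟨fun h => le_antisymm hNJ_le (h ▸ hle), hNJ_eq⟩, ⟨fun h => ?_, hle.trans_lt⟩⟩
  exact hNJ_le.lt_of_ne fun h' => h.ne (hNJ_eq h')

theorem stmt_16 (X : Type*) [NormedAddCommGroup X] [NormedSpace ℝ X] [CompleteSpace X]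
    [Nontrivial X] (n : ℕ) (hn : 2 ≤ n) :
    (upperMNJ X n = n ↔ upperNJ X n = n) ∧ (upperMNJ X n < n ↔ upperNJ X n < n) :=
  stmt_16_general X n hn
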